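/- arXiv:0903.5286 — 2 statements merged into one kernel-verified Lean document; each statement's English description precedes it below -/
import Mathlib

section
/- Let p, q be coprime positive integers and let P₀, P₁ be positive integers with P₀ ≥ 2pq and P₁ ≥ 2pq. Suppose P₀ = a·p + b·q and P₁ = c·p + d·q with a, b, c, d ∈ ℕ, b < p and c < q. Then a·d > b·c, and moreover P₀·P₁ = p·c·P₀ + q·b·P₁ + p·q·(a·d − b·c). -/
/-!
Since `b < p`, the term `b * q` contributes less than `p * q` to `P₀ = a * p + b * q ≥ 2 * p * q`,
so `a > q`; symmetrically `d > p`. Hence `a * d > p * q > b * c`, and the identity is a ring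
identity once `a * d - b * c` is read in `ℤ`.
-/

theorem Nat.lt_of_two_mul_mul_le_mul_add_mul {p q a b : ℕ} (hq : 0 < q)
    (h : 2 * (p * q) ≤ a * p + b * q) (hb : b < p) : q < a := by
  have hbq : b * q < p * q := Nat.mul_lt_mul_of_pos_right hb hq
  have hqa : q * p < a * p := by linarith
  exact Nat.lt_of_mul_lt_mul_right hqa

theorem mul_add_mul_mul_mul_add_mul {R : Type*} [CommRing R] (p q a b c d : R) :
    (a * p + b * q) * (c * p + d * q) =
      p * c * (a * p + b * q) + q * b * (c * p + d * q) + p * q * (a * d - b * c) := by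
  ring

theorem stmt_1_general (p q P₀ P₁ a b c d : ℕ)
    (hP₀ : 2 * (p * q) ≤ P₀) (hP₁ : 2 * (p * q) ≤ P₁)
    (h₀ : P₀ = a * p + b * q) (h₁ : P₁ = c * p + d * q)
    (hb : b < p) (hc : c < q) :
    b * c < a * d ∧ P₀ * P₁ = p * c * P₀ + q * b * P₁ + p * q * (a * d - b * c) := by
  subst h₀ h₁
  have ha : q < a := Nat.lt_of_two_mul_mul_le_mul_add_mul (by omega) hP₀ hb
  have hd : p < d := Nat.lt_of_two_mul_mul_le_mul_add_mul (by omega) (by linarith) hc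
  have hlt : b * c < a * d := mul_comm d a ▸ Nat.mul_lt_mul'' (hb.trans hd) (hc.trans ha)
  refine ⟨hlt, ?_⟩
  zify [hlt.le]
  exact mul_add_mul_mul_mul_add_mul _ _ _ _ _ _

theorem stmt_1 (p q P₀ P₁ a b c d : ℕ) (hp : 0 < p) (hq : 0 < q)
    (hcop : Nat.gcd p q = 1)
    (hP₀pos : 0 < P₀) (hP₁pos : 0 < P₁)
    (hP₀ : 2 * (p * q) ≤ P₀) (hP₁ : 2 * (p * q) ≤ P₁)
    (h₀ : P₀ = a * p + b * q) (h₁ : P₁ = c * p + d * q)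
    (hb : b < p) (hc : c < q) :
    b * c < a * d ∧ P₀ * P₁ = p * c * P₀ + q * b * P₁ + p * q * (a * d - b * c) :=
  stmt_1_general p q P₀ P₁ a b c d hP₀ hP₁ h₀ h₁ hb hc
end

section
/- Let s ∈ ℕ, d ∈ ℕ with d ≥ 1, and d₁, …, d_s positive integers dividing d. Define the group homomorphism δ : ℤ × ℤ^s → ℤ^s by δ(x, y₁, …, y_s) = (d·x − d₁·y₁, …, d·x − d_s·y_s). Then the kernel of δ is the infinite cyclic subgroup generated by (1, d/d₁, …, d/d_s). -/
theorem AddSubgroup.mem_zmultiples_int_one_prod_iff {M : Type*} [AddCommGroup M] (v : M)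
    (x : ℤ × M) : x ∈ AddSubgroup.zmultiples ((1 : ℤ), v) ↔ x.2 = x.1 • v := by
  rw [AddSubgroup.mem_zmultiples_iff]
  constructor
  · rintro ⟨n, rfl⟩
    simp
  · intro hx
    exact ⟨x.1, Prod.ext (by simp) (by simp [hx])⟩

theorem mul_sub_mul_eq_zero_iff_eq_mul {R : Type*} [CommRing R] [NoZeroDivisors R]
    {d e q x y : R} (he : e ≠ 0) (hd : q * e = d) : d * x - e * y = 0 ↔ y = x * q := by
  rw [← hd, show q * e * x - e * y = e * (x * q - y) by ring, mul_eq_zero,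
    or_iff_right he, sub_eq_zero, eq_comm]

theorem stmt_8_general (s : ℕ) (d : ℕ) (dv : Fin s → ℕ)
    (hdvpos : ∀ j, 0 < dv j) (hdvd : ∀ j, dv j ∣ d)
    (δ : ℤ × (Fin s → ℤ) →+ (Fin s → ℤ))
    (hδ : ∀ x j, δ x j = (d : ℤ) * x.1 - (dv j : ℤ) * x.2 j) :
    δ.ker = AddSubgroup.zmultiples ((1, fun j => ((d / dv j : ℕ) : ℤ)) : ℤ × (Fin s → ℤ)) := by
  ext x
  rw [AddMonoidHom.mem_ker, AddSubgroup.mem_zmultiples_int_one_prod_iff, funext_iff,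
    funext_iff]
  refine forall_congr' fun j => ?_
  rw [hδ, Pi.zero_apply, Pi.smul_apply, smul_eq_mul]
  exact mul_sub_mul_eq_zero_iff_eq_mul (by exact_mod_cast (hdvpos j).ne')
    (by rw [← Nat.cast_mul, Nat.div_mul_cancel (hdvd j)])

theorem stmt_8 (s : ℕ) (d : ℕ) (hd : 1 ≤ d) (dv : Fin s → ℕ)
    (hdvpos : ∀ j, 0 < dv j) (hdvd : ∀ j, dv j ∣ d)
    (δ : ℤ × (Fin s → ℤ) →+ (Fin s → ℤ))
    (hδ : ∀ x j, δ x j = (d : ℤ) * x.1 - (dv j : ℤ) * x.2 j) :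
    δ.ker = AddSubgroup.zmultiples ((1, fun j => ((d / dv j : ℕ) : ℤ)) : ℤ × (Fin s → ℤ)) :=
  stmt_8_general s d dv hdvpos hdvd δ hδ
end
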